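/- arXiv:2310.06760 — 4 statements merged into one kernel-verified Lean document; each statement's English description precedes it below -/
import Mathlib

section
/- Let X be a nonnegative random variable with E[X] ≤ 2 and X ≤ M almost surely, and let ε ~ N(0,σ²) be independent of X. Then for every λ with 0 < λ ≤ n/(σM), E[exp((λ/n) ε X)] ≤ 1 + (2/M)(exp(λ²σ²M²/n²) − 1). -/
/-! Conditionally on `X = x`, the exponent `(λ/n) ε x` is a centred Gaussian of variance
`(λσx/n)²`, so the left-hand side equals `E[exp(a X²)]` with `a = λ²σ²/(2n²)`. On `[0, M]`,
`(x/M)² ≤ x/M` and convexity of `exp` give `exp(a x²) ≤ 1 + (x/M)(exp(a M²) - 1)`; taking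
expectations and using `E[X] ≤ 2`, `a M² ≤ λ²σ²M²/n²` finishes. -/

open MeasureTheory ProbabilityTheory Real

namespace Real

lemma exp_mul_le_one_add_mul_exp_sub_one {θ : ℝ} (h0 : 0 ≤ θ) (h1 : θ ≤ 1) (a : ℝ) :
    exp (θ * a) ≤ 1 + θ * (exp a - 1) := by
  calc exp (θ * a) = exp ((1 - θ) * 0 + θ * a) := by ring_nf
    _ ≤ (1 - θ) * exp 0 + θ * exp a :=
        convexOn_exp.2 (Set.mem_univ _) (Set.mem_univ _) (by linarith) h0 (by ring)
    _ = 1 + θ * (exp a - 1) := by rw [exp_zero]; ring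

lemma exp_mul_sq_le_one_add_div_mul {a x M : ℝ} (ha : 0 ≤ a) (hM : 0 < M) (hx0 : 0 ≤ x)
    (hxM : x ≤ M) : exp (a * x ^ 2) ≤ 1 + x / M * (exp (a * M ^ 2) - 1) := by
  have hθ0 : 0 ≤ x / M := div_nonneg hx0 hM.le
  have hθ1 : x / M ≤ 1 := (div_le_one hM).2 hxM
  calc exp (a * x ^ 2) = exp ((x / M) ^ 2 * (a * M ^ 2)) := by field_simp
    _ ≤ exp (x / M * (a * M ^ 2)) := by
        gcongr
        nlinarith [mul_nonneg ha (sq_nonneg M)]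
    _ ≤ 1 + x / M * (exp (a * M ^ 2) - 1) := exp_mul_le_one_add_mul_exp_sub_one hθ0 hθ1 _

end Real

lemma lintegral_ofReal_exp_mul_gaussianReal (v : NNReal) (c : ℝ) :
    ∫⁻ y, ENNReal.ofReal (exp (c * y)) ∂gaussianReal 0 v
      = ENNReal.ofReal (exp (v * c ^ 2 / 2)) := by
  rw [← ofReal_integral_eq_lintegral_ofReal (integrable_exp_mul_gaussianReal c)
    (ae_of_all _ fun _ => (exp_pos _).le)]
  congr 1
  simpa [mgf] using congr_fun (mgf_id_gaussianReal (μ := 0) (v := v)) c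

section
variable {Ω : Type*} [MeasurableSpace Ω] {P : Measure Ω} [IsProbabilityMeasure P] {X ε : Ω → ℝ}

theorem integral_exp_mul_mul_of_indepFun_gaussianReal (hX : AEMeasurable X P) {v : NNReal}
    (hε : P.map ε = gaussianReal 0 v) (hindep : IndepFun ε X P) (t : ℝ) :
    ∫ ω, exp (t * (ε ω * X ω)) ∂P = ∫ ω, exp (v * (t * X ω) ^ 2 / 2) ∂P := by
  have hεm : AEMeasurable ε P := aemeasurable_of_map_neZero (by rw [hε]; infer_instance)
  have hlaw : P.map (fun ω => (X ω, ε ω)) = (P.map X).prod (gaussianReal 0 v) :=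
    hε ▸ hindep.symm.map_prod_eq_prod_map_map hX hεm
  -- Tonelli for the nonnegative integrand, so no integrability of `exp (t * ε * X)` is needed.
  have hlint : ∫⁻ ω, ENNReal.ofReal (exp (t * (ε ω * X ω))) ∂P
      = ∫⁻ ω, ENNReal.ofReal (exp (v * (t * X ω) ^ 2 / 2)) ∂P := by
    calc _ = ∫⁻ p : ℝ × ℝ, ENNReal.ofReal (exp (t * p.1 * p.2))
          ∂P.map (fun ω => (X ω, ε ω)) := by
          rw [lintegral_map' (by fun_prop) (hX.prodMk hεm)]
          congr 1; funext ω; congr 2; ring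
      _ = ∫⁻ x, ENNReal.ofReal (exp (v * (t * x) ^ 2 / 2)) ∂P.map X := by
          rw [hlaw, lintegral_prod _ (by fun_prop)]
          simp_rw [lintegral_ofReal_exp_mul_gaussianReal]
      _ = _ := lintegral_map' (by fun_prop) hX
  rw [integral_eq_lintegral_of_nonneg_ae (ae_of_all _ fun _ => (exp_pos _).le) (by fun_prop),
    integral_eq_lintegral_of_nonneg_ae (ae_of_all _ fun _ => (exp_pos _).le) (by fun_prop), hlint]

theorem integral_exp_mul_sq_le (hXint : Integrable X P) {M : ℝ} (hM : 0 < M)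
    (hX0 : ∀ᵐ ω ∂P, 0 ≤ X ω) (hXM : ∀ᵐ ω ∂P, X ω ≤ M) {a : ℝ} (ha : 0 ≤ a) :
    ∫ ω, exp (a * X ω ^ 2) ∂P ≤ 1 + (∫ ω, X ω ∂P) / M * (exp (a * M ^ 2) - 1) := by
  have hbound : ∀ᵐ ω ∂P, exp (a * X ω ^ 2) ≤ 1 + X ω * ((exp (a * M ^ 2) - 1) / M) := by
    filter_upwards [hX0, hXM] with ω h0 hM'
    exact (exp_mul_sq_le_one_add_div_mul ha hM h0 hM').trans_eq (by ring)
  calc ∫ ω, exp (a * X ω ^ 2) ∂P ≤ ∫ ω, (1 + X ω * ((exp (a * M ^ 2) - 1) / M)) ∂P :=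
        integral_mono_of_nonneg (ae_of_all _ fun _ => (exp_pos _).le)
          ((integrable_const 1).add (hXint.mul_const _)) hbound
    _ = 1 + (∫ ω, X ω ∂P) / M * (exp (a * M ^ 2) - 1) := by
        rw [integral_add (integrable_const 1) (hXint.mul_const _), integral_const,
          integral_mul_const]
        simp only [probReal_univ, smul_eq_mul, one_mul]
        ring

end

theorem mgf_gaussian_weighted_general {Ω : Type} [MeasurableSpace Ω]
    (P : Measure Ω) [IsProbabilityMeasure P]
    (X ε : Ω → ℝ) (hXm : Measurable X)
    (σ : NNReal) (M : ℝ) (hM : 0 < M) (n : ℝ)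
    (hX0 : ∀ ω, 0 ≤ X ω) (hXint : Integrable X P) (hXmean : ∫ ω, X ω ∂P ≤ 2)
    (hXbd : ∀ᵐ ω ∂P, X ω ≤ M)
    (hε : Measure.map ε P = gaussianReal 0 (σ ^ 2))
    (hindep : IndepFun ε X P)
    (lam : ℝ) :
    ∫ ω, exp ((lam / n) * (ε ω * X ω)) ∂P ≤
      1 + (2 / M) * (exp (lam ^ 2 * σ ^ 2 * M ^ 2 / n ^ 2) - 1) := by
  set a : ℝ := σ ^ 2 * (lam / n) ^ 2 / 2
  have hsq : ∀ ω, ((σ ^ 2 : NNReal) : ℝ) * (lam / n * X ω) ^ 2 / 2 = a * X ω ^ 2 := fun ω => by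
    push_cast; ring
  have ha : 0 ≤ a := by positivity
  have hexp : exp (a * M ^ 2) ≤ exp (lam ^ 2 * σ ^ 2 * M ^ 2 / n ^ 2) := by
    rw [show a * M ^ 2 = lam ^ 2 * σ ^ 2 * M ^ 2 / n ^ 2 / 2 by ring]
    exact exp_le_exp.2 (half_le_self (by positivity))
  have hexp1 : 0 ≤ exp (a * M ^ 2) - 1 := sub_nonneg.2 (one_le_exp (by positivity))
  rw [integral_exp_mul_mul_of_indepFun_gaussianReal hXm.aemeasurable hε hindep]
  simp_rw [hsq]
  calc ∫ ω, exp (a * X ω ^ 2) ∂P ≤ 1 + (∫ ω, X ω ∂P) / M * (exp (a * M ^ 2) - 1) :=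
        integral_exp_mul_sq_le hXint hM (ae_of_all _ hX0) hXbd ha
    _ ≤ 1 + 2 / M * (exp (lam ^ 2 * σ ^ 2 * M ^ 2 / n ^ 2) - 1) := by
        gcongr

/-- For a nonnegative random variable `X` with `E[X] ≤ 2`, `X ≤ M` a.s., and
`ε ~ N(0,σ²)` independent of `X`, for every `0 < λ ≤ n/(σM)` one has
`E[exp((λ/n) ε X)] ≤ 1 + (2/M)(exp(λ²σ²M²/n²) - 1)`. -/
theorem mgf_gaussian_weighted {Ω : Type} [MeasurableSpace Ω]
    (P : Measure Ω) [IsProbabilityMeasure P]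
    (X ε : Ω → ℝ) (hXm : Measurable X) (hεm : Measurable ε)
    (σ : NNReal) (hσ : 0 < σ) (M : ℝ) (hM : 0 < M) (n : ℝ) (hn : 0 < n)
    (hX0 : ∀ ω, 0 ≤ X ω) (hXint : Integrable X P) (hXmean : ∫ ω, X ω ∂P ≤ 2)
    (hXbd : ∀ᵐ ω ∂P, X ω ≤ M)
    (hε : Measure.map ε P = gaussianReal 0 (σ ^ 2))
    (hindep : IndepFun ε X P)
    (lam : ℝ) (hlam0 : 0 < lam) (hlam1 : lam ≤ n / (σ * M)) :
    ∫ ω, exp ((lam / n) * (ε ω * X ω)) ∂P ≤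
      1 + (2 / M) * (exp (lam ^ 2 * σ ^ 2 * M ^ 2 / n ^ 2) - 1) :=
  mgf_gaussian_weighted_general P X ε hXm σ M hM n hX0 hXint hXmean hXbd hε hindep lam
end

section
/- Let G = ℤ₂^{kd} with dual Γ, and let φ(a−b) = K(a,b) = d^{−k} ∑_{l∈ℕ^d, |l|=k} (k choose l) ∏_{j=1}^d ∏_{i=1}^{l_j} χ(a^j_i = b^j_i), where elements of Γ are indexed as d columns of length k. Then the inverse Fourier transform μ = φ̌ satisfies: μ(x) ≠ 0 if and only if there exists l = (l_1,...,l_d) ∈ ℕ^d with l_1+...+l_d = k such that x^j_i = 0 for all j and all i with l_j+1 ≤ i ≤ k. -/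
set_option maxHeartbeats 1000000

open Finset

lemma kerf_sum_zmod2 (f : ZMod 2 → ℝ) : ∑ t : ZMod 2, f t = f 0 + f 1 :=
  Fin.sum_univ_two f

lemma kerf_neg_one_pow_val_add (a b : ZMod 2) :
    (-1:ℝ) ^ (a+b).val = (-1:ℝ) ^ a.val * (-1:ℝ) ^ b.val := by
  obtain rfl | rfl : a = 0 ∨ a = 1 := (by revert a; decide) <;>
    obtain rfl | rfl : b = 0 ∨ b = 1 := (by revert b; decide) <;>
    norm_num [(by decide : ((2:ZMod 2)).val = 0), (by decide : ((0:ZMod 2)).val = 0),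
      (by decide : ((1:ZMod 2)).val = 1)]

lemma kerf_neg_one_pow_val_sum {ι : Type*} (s : Finset ι) (f : ι → ZMod 2) :
    (-1:ℝ) ^ (∑ i ∈ s, f i).val = ∏ i ∈ s, (-1:ℝ) ^ (f i).val := by
  induction s using Finset.cons_induction with
  | empty => simp
  | cons i s hi ih =>
    rw [Finset.sum_cons, Finset.prod_cons, kerf_neg_one_pow_val_add, ih]

lemma kerf_inner_sum (c : Prop) [Decidable c] (z : ZMod 2) :
    ∑ t : ZMod 2, (if c then (if t = 0 then (1:ℝ) else 0) else 1) * (-1:ℝ) ^ ((t*z).val)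
    = if c then 1 else if z = 0 then 2 else 0 := by
  rw [kerf_sum_zmod2]
  obtain rfl | rfl : z = 0 ∨ z = 1 := (by revert z; decide) <;> by_cases hc : c <;>
    simp [hc, (by decide : ((0:ZMod 2)).val = 0), (by decide : ((1:ZMod 2)).val = 1)] <;>
    norm_num

lemma kerf_hterm (k d : ℕ) (x : Fin k → Fin d → ZMod 2) (l : Fin d → ℕ)
    (a : Fin k → Fin d → ZMod 2) :
      (∏ j : Fin d, ∏ i ∈ Finset.univ.filter (fun i : Fin k => (i : ℕ) < l j),
        (if a i j = 0 then (1:ℝ) else 0)) * (-1 : ℝ) ^ (∑ i : Fin k, ∑ j : Fin d, a i j * x i j).val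
      = ∏ i : Fin k, ∏ j : Fin d,
          ((if (i:ℕ) < l j then (if a i j = 0 then (1:ℝ) else 0) else 1) *
            (-1:ℝ) ^ ((a i j * x i j).val)) := by
  have h1 : (-1 : ℝ) ^ (∑ i : Fin k, ∑ j : Fin d, a i j * x i j).val
      = ∏ i : Fin k, ∏ j : Fin d, (-1:ℝ) ^ ((a i j * x i j).val) := by
    rw [kerf_neg_one_pow_val_sum]
    exact Finset.prod_congr rfl fun i _ => kerf_neg_one_pow_val_sum _ _
  have h2 : (∏ j : Fin d, ∏ i ∈ Finset.univ.filter (fun i : Fin k => (i : ℕ) < l j),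
      (if a i j = 0 then (1:ℝ) else 0))
      = ∏ i : Fin k, ∏ j : Fin d,
          (if (i:ℕ) < l j then (if a i j = 0 then (1:ℝ) else 0) else 1) := by
    rw [Finset.prod_comm]
    exact Finset.prod_congr rfl fun j _ => (Finset.prod_filter _ _)
  rw [h1, h2, ← Finset.prod_mul_distrib]
  exact Finset.prod_congr rfl fun i _ => (Finset.prod_mul_distrib).symm

lemma kerf_key (k d : ℕ) (x : Fin k → Fin d → ZMod 2) (l : Fin d → ℕ) :
    ∑ a : Fin k → Fin d → ZMod 2,
      (∏ j : Fin d, ∏ i ∈ Finset.univ.filter (fun i : Fin k => (i : ℕ) < l j),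
        (if a i j = 0 then (1:ℝ) else 0)) * (-1 : ℝ) ^ (∑ i : Fin k, ∑ j : Fin d, a i j * x i j).val
    = ∏ i : Fin k, ∏ j : Fin d,
        (if (i:ℕ) < l j then (1:ℝ) else if x i j = 0 then 2 else 0) := by
  have e1 : ∑ a : Fin k → Fin d → ZMod 2,
      (∏ j : Fin d, ∏ i ∈ Finset.univ.filter (fun i : Fin k => (i : ℕ) < l j),
        (if a i j = 0 then (1:ℝ) else 0)) * (-1 : ℝ) ^ (∑ i : Fin k, ∑ j : Fin d, a i j * x i j).val
      = ∑ a ∈ Fintype.piFinset (fun _ : Fin k => (Finset.univ : Finset (Fin d → ZMod 2))),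
          ∏ i : Fin k, ∏ j : Fin d,
            ((if (i:ℕ) < l j then (if a i j = 0 then (1:ℝ) else 0) else 1) *
              (-1:ℝ) ^ ((a i j * x i j).val)) := by
    rw [Fintype.piFinset_univ]
    exact Finset.sum_congr rfl fun a _ => kerf_hterm k d x l a
  have e2 : (∑ a ∈ Fintype.piFinset (fun _ : Fin k => (Finset.univ : Finset (Fin d → ZMod 2))),
          ∏ i : Fin k, ∏ j : Fin d,
            ((if (i:ℕ) < l j then (if a i j = 0 then (1:ℝ) else 0) else 1) *
              (-1:ℝ) ^ ((a i j * x i j).val)))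
      = ∏ i : Fin k, ∑ b ∈ (Finset.univ : Finset (Fin d → ZMod 2)),
          ∏ j : Fin d,
            ((if (i:ℕ) < l j then (if b j = 0 then (1:ℝ) else 0) else 1) *
              (-1:ℝ) ^ ((b j * x i j).val)) :=
    (Finset.prod_univ_sum (fun _ : Fin k => (Finset.univ : Finset (Fin d → ZMod 2)))
      (fun i b => ∏ j : Fin d,
        ((if (i:ℕ) < l j then (if b j = 0 then (1:ℝ) else 0) else 1) *
          (-1:ℝ) ^ ((b j * x i j).val)))).symm
  have e3 : ∀ i : Fin k, (∑ b ∈ (Finset.univ : Finset (Fin d → ZMod 2)),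
          ∏ j : Fin d,
            ((if (i:ℕ) < l j then (if b j = 0 then (1:ℝ) else 0) else 1) *
              (-1:ℝ) ^ ((b j * x i j).val)))
      = ∏ j : Fin d, ∑ t : ZMod 2,
          ((if (i:ℕ) < l j then (if t = 0 then (1:ℝ) else 0) else 1) *
            (-1:ℝ) ^ ((t * x i j).val)) := by
    intro i
    rw [show (Finset.univ : Finset (Fin d → ZMod 2))
        = Fintype.piFinset (fun _ : Fin d => (Finset.univ : Finset (ZMod 2)))
        from (Fintype.piFinset_univ).symm]
    exact (Finset.prod_univ_sum (fun _ : Fin d => (Finset.univ : Finset (ZMod 2)))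
      (fun j t => (if (i:ℕ) < l j then (if t = 0 then (1:ℝ) else 0) else 1) *
        (-1:ℝ) ^ ((t * x i j).val))).symm
  rw [e1, e2]
  refine Finset.prod_congr rfl fun i _ => ?_
  rw [e3 i]
  exact Finset.prod_congr rfl fun j _ => kerf_inner_sum _ _

/-- Support of the inverse Fourier transform of the centered KeRF kernel on `ℤ₂^{kd}`:
with `φ(c) = d^{-k} ∑_{|l|=k} (k choose l) ∏_j ∏_{i < l_j} χ(cᵢʲ = 0)` and
`μ = φ̌` (inverse transform w.r.t. the characters `γ_a(x) = (-1)^{a·x}`), one has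
`μ(x) ≠ 0` iff there is `l ∈ ℕ^d` with `l₁+⋯+l_d = k` and `xᵢʲ = 0` whenever `l_j ≤ i`
(0-indexed rows `i`). -/
theorem kerf_mu_support (k d : ℕ) (hk : 0 < k) (hd : 0 < d)
    (φ : (Fin k → Fin d → ZMod 2) → ℝ)
    (hφ : ∀ c, φ c = ((d : ℝ) ^ k)⁻¹ *
      ∑ l ∈ Finset.Nat.antidiagonalTuple d k, (Nat.multinomial Finset.univ l : ℝ) *
        ∏ j : Fin d, ∏ i ∈ Finset.univ.filter (fun i : Fin k => (i : ℕ) < l j),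
          (if c i j = 0 then (1:ℝ) else 0))
    (μ : (Fin k → Fin d → ZMod 2) → ℝ)
    (hμ : ∀ x, μ x = ((2 : ℝ) ^ (k * d))⁻¹ *
      ∑ a : Fin k → Fin d → ZMod 2,
        φ a * (-1 : ℝ) ^ (∑ i : Fin k, ∑ j : Fin d, a i j * x i j).val) :
    ∀ x : Fin k → Fin d → ZMod 2,
      μ x ≠ 0 ↔ ∃ l : Fin d → ℕ, (∑ j, l j) = k ∧
        ∀ (j : Fin d) (i : Fin k), l j ≤ (i : ℕ) → x i j = 0 := by
  intro x
  set T : (Fin d → ℕ) → ℝ := fun l => ∏ i : Fin k, ∏ j : Fin d,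
      (if (i:ℕ) < l j then (1:ℝ) else if x i j = 0 then 2 else 0) with hT
  have h1 : μ x = ((2 : ℝ) ^ (k * d))⁻¹ * (((d : ℝ) ^ k)⁻¹ *
      ∑ l ∈ Finset.Nat.antidiagonalTuple d k,
        (Nat.multinomial Finset.univ l : ℝ) * T l) := by
    rw [hμ x]
    congr 1
    have hterm : ∀ a : Fin k → Fin d → ZMod 2,
        φ a * (-1 : ℝ) ^ (∑ i : Fin k, ∑ j : Fin d, a i j * x i j).val
        = ((d : ℝ) ^ k)⁻¹ * ∑ l ∈ Finset.Nat.antidiagonalTuple d k,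
            (Nat.multinomial Finset.univ l : ℝ) *
              ((∏ j : Fin d, ∏ i ∈ Finset.univ.filter (fun i : Fin k => (i : ℕ) < l j),
                (if a i j = 0 then (1:ℝ) else 0)) *
                (-1 : ℝ) ^ (∑ i : Fin k, ∑ j : Fin d, a i j * x i j).val) := by
      intro a
      rw [hφ a, mul_assoc, Finset.sum_mul]
      simp only [mul_assoc]
    rw [Finset.sum_congr rfl fun a _ => hterm a, ← Finset.mul_sum]
    congr 1
    rw [Finset.sum_comm]
    refine Finset.sum_congr rfl fun l _ => ?_
    rw [← Finset.mul_sum, kerf_key k d x l]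
  have hd2 : ((2 : ℝ) ^ (k * d))⁻¹ ≠ 0 := by positivity
  have hdk : (((d : ℝ) ^ k))⁻¹ ≠ 0 := by
    have : (d : ℝ) ≠ 0 := Nat.cast_ne_zero.mpr hd.ne'
    positivity
  have hTnn : ∀ l : Fin d → ℕ, 0 ≤ T l := by
    intro l
    refine Finset.prod_nonneg fun i _ => Finset.prod_nonneg fun j _ => ?_
    split_ifs <;> norm_num
  have hTne : ∀ l : Fin d → ℕ,
      T l ≠ 0 ↔ ∀ (j : Fin d) (i : Fin k), l j ≤ (i : ℕ) → x i j = 0 := by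
    intro l
    rw [hT]
    simp only [Finset.prod_ne_zero_iff]
    constructor
    · intro h j i hle
      have := h i (Finset.mem_univ i) j (Finset.mem_univ j)
      rw [if_neg (by omega)] at this
      by_contra hx
      rw [if_neg hx] at this
      exact this rfl
    · intro h i _ j _
      by_cases hij : (i:ℕ) < l j
      · rw [if_pos hij]; norm_num
      · rw [if_neg hij, if_pos (h j i (by omega))]; norm_num
  rw [h1]
  rw [mul_ne_zero_iff, mul_ne_zero_iff]
  have hMne : ∀ l : Fin d → ℕ, ((Nat.multinomial Finset.univ l : ℝ)) ≠ 0 := fun l =>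
    Nat.cast_ne_zero.mpr (Nat.multinomial_pos _ _).ne'
  constructor
  · rintro ⟨-, -, hS⟩
    obtain ⟨l, hlmem, hlne⟩ := Finset.exists_ne_zero_of_sum_ne_zero hS
    refine ⟨l, Finset.Nat.mem_antidiagonalTuple.mp hlmem, ?_⟩
    exact (hTne l).mp fun hT0 => hlne (by rw [hT0, mul_zero])
  · rintro ⟨l, hlsum, hlx⟩
    refine ⟨hd2, hdk, ?_⟩
    intro hS
    have hS' := (Finset.sum_eq_zero_iff_of_nonneg
      (fun l _ => mul_nonneg (Nat.cast_nonneg _) (hTnn l))).mp hS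
    have := hS' l (Finset.Nat.mem_antidiagonalTuple.mpr hlsum)
    exact (mul_ne_zero (hMne l) ((hTne l).mpr hlx)) this
end

section
/- With G = ℤ₂^{kd} and the centered KeRF kernel φ as above, for x in the support of μ = φ̌ one has μ(x) = (2^k d^k)^{−1} ∑ (k choose l), where the sum is over all l ∈ ℕ^d with |l| = k such that x^j_i = 0 whenever l_j+1 ≤ i ≤ k. -/
open Finset

private noncomputable def kerfχ (z : ZMod 2) : ℝ := (-1 : ℝ) ^ z.val

private lemma kerfχ_zero : kerfχ 0 = 1 := by simp [kerfχ]

private lemma kerfχ_one : kerfχ 1 = -1 := by simp [kerfχ, ZMod.val_one]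

private lemma kerfχ_add (u v : ZMod 2) : kerfχ (u + v) = kerfχ u * kerfχ v := by
  have h : ∀ w : ZMod 2, w = 0 ∨ w = 1 := by decide
  rcases h u with hu | hu <;> rcases h v with hv | hv <;> subst hu <;> subst hv <;>
    norm_num [kerfχ, ZMod.val_zero, ZMod.val_one,
      show (1 + 1 : ZMod 2) = 0 from by decide, show (2 : ZMod 2) = 0 from by decide,
      show ZMod.val (2 : ZMod 2) = 0 from by decide]

private lemma kerfχ_sum {ι : Type*} (s : Finset ι) (f : ι → ZMod 2) :
    kerfχ (∑ i ∈ s, f i) = ∏ i ∈ s, kerfχ (f i) := by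
  classical
  induction s using Finset.induction_on with
  | empty => simp [kerfχ_zero]
  | @insert a s h ih => rw [Finset.sum_insert h, Finset.prod_insert h, kerfχ_add, ih]

private lemma sum_zmod2 (f : ZMod 2 → ℝ) : ∑ b : ZMod 2, f b = f 0 + f 1 := by
  have h : (Finset.univ : Finset (ZMod 2)) = {0, 1} := by decide
  rw [h, Finset.sum_insert (by decide), Finset.sum_singleton]

private lemma prod_ite_two (k m : ℕ) (hm : m ≤ k) :
    ∏ i : Fin k, (if (i : ℕ) < m then (1:ℝ) else 2) = 2 ^ (k - m) := by
  rw [Fin.prod_univ_eq_prod_range (fun i => if i < m then (1:ℝ) else 2) k,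
    Finset.range_eq_Ico, ← Finset.prod_Ico_consecutive _ (Nat.zero_le m) hm]
  have h1 : ∏ i ∈ Finset.Ico 0 m, (if i < m then (1:ℝ) else 2) = 1 := by
    apply Finset.prod_eq_one
    intro i hi
    simp only [Finset.mem_Ico] at hi
    simp [hi.2]
  have h2 : ∏ i ∈ Finset.Ico m k, (if i < m then (1:ℝ) else 2) = 2 ^ (k - m) := by
    rw [Finset.prod_congr rfl (fun i hi => ?_), Finset.prod_const, Nat.card_Ico]
    simp only [Finset.mem_Ico] at hi
    simp [Nat.not_lt.mpr hi.1]
  rw [h1, h2, one_mul]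

private lemma core (k d : ℕ) (x : Fin k → Fin d → ZMod 2) (m : Fin d → ℕ)
    (hm : ∀ j, m j ≤ k) :
    ∑ a : Fin k → Fin d → ZMod 2,
      (∏ j : Fin d, ∏ i ∈ Finset.univ.filter (fun i : Fin k => (i : ℕ) < m j),
          (if a i j = 0 then (1:ℝ) else 0)) *
        ∏ i : Fin k, ∏ j : Fin d, kerfχ (a i j * x i j)
    = if (∀ (j : Fin d) (i : Fin k), m j ≤ (i : ℕ) → x i j = 0)
      then (2:ℝ) ^ (∑ j, (k - m j)) else 0 := by
  classical
  set F : Fin k → Fin d → ZMod 2 → ℝ := fun i j b =>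
    (if (i : ℕ) < m j then (if b = 0 then (1:ℝ) else 0) else 1) * kerfχ (b * x i j)
    with hF
  have hsummand : ∀ a : Fin k → Fin d → ZMod 2,
      (∏ j : Fin d, ∏ i ∈ Finset.univ.filter (fun i : Fin k => (i : ℕ) < m j),
          (if a i j = 0 then (1:ℝ) else 0)) *
        ∏ i : Fin k, ∏ j : Fin d, kerfχ (a i j * x i j)
      = ∏ i : Fin k, ∏ j : Fin d, F i j (a i j) := by
    intro a
    have h1 : ∀ j : Fin d,
        ∏ i ∈ Finset.univ.filter (fun i : Fin k => (i : ℕ) < m j),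
          (if a i j = 0 then (1:ℝ) else 0)
        = ∏ i : Fin k, (if (i : ℕ) < m j then (if a i j = 0 then (1:ℝ) else 0) else 1) := by
      intro j
      rw [Finset.prod_filter]
    rw [Finset.prod_congr rfl (fun j _ => h1 j), Finset.prod_comm,
      ← Finset.prod_mul_distrib]
    exact Finset.prod_congr rfl fun i _ => by rw [← Finset.prod_mul_distrib]
  rw [Finset.sum_congr rfl fun a _ => hsummand a]
  have hswap : ∑ a : Fin k → Fin d → ZMod 2, ∏ i : Fin k, ∏ j : Fin d, F i j (a i j)
      = ∏ i : Fin k, ∏ j : Fin d, ∑ b : ZMod 2, F i j b := by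
    rw [show (∏ i : Fin k, ∏ j : Fin d, ∑ b : ZMod 2, F i j b)
        = ∏ i : Fin k, ∑ g : Fin d → ZMod 2, ∏ j : Fin d, F i j (g j) from
      Finset.prod_congr rfl fun i _ => Fintype.prod_sum _,
      Fintype.prod_sum]
  rw [hswap]
  have hval : ∀ (i : Fin k) (j : Fin d), ∑ b : ZMod 2, F i j b
      = if (i : ℕ) < m j then (1:ℝ) else (if x i j = 0 then 2 else 0) := by
    intro i j
    rw [sum_zmod2]
    by_cases h : (i : ℕ) < m j
    · simp [hF, h, kerfχ_zero]
    · have hx : x i j = 0 ∨ x i j = 1 := by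
        have : ∀ w : ZMod 2, w = 0 ∨ w = 1 := by decide
        exact this _
      rcases hx with hx | hx <;>
        simp [hF, h, hx, kerfχ_zero, kerfχ_one] <;> norm_num
  rw [Finset.prod_congr rfl fun i _ => Finset.prod_congr rfl fun j _ => hval i j]
  by_cases hcond : ∀ (j : Fin d) (i : Fin k), m j ≤ (i : ℕ) → x i j = 0
  · rw [if_pos hcond]
    have h1 : ∀ (i : Fin k) (j : Fin d),
        (if (i : ℕ) < m j then (1:ℝ) else (if x i j = 0 then 2 else 0))
        = (if (i : ℕ) < m j then (1:ℝ) else 2) := by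
      intro i j
      by_cases h : (i : ℕ) < m j
      · simp [h]
      · simp [h, hcond j i (Nat.le_of_not_lt h)]
    rw [Finset.prod_congr rfl fun i _ => Finset.prod_congr rfl fun j _ => h1 i j,
      Finset.prod_comm,
      Finset.prod_congr rfl fun j _ => prod_ite_two k (m j) (hm j),
      Finset.prod_pow_eq_pow_sum]
  · rw [if_neg hcond]
    push_neg at hcond
    obtain ⟨j, i, hji, hx⟩ := hcond
    apply Finset.prod_eq_zero (Finset.mem_univ i)
    apply Finset.prod_eq_zero (Finset.mem_univ j)
    simp [Nat.not_lt.mpr hji, hx]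

/-- Value of the inverse Fourier transform of the centered KeRF kernel on its support:
for `x` with `μ(x) ≠ 0`, `μ(x) = (2^k d^k)⁻¹ ∑ (k choose l)`, the sum running over all
`l ∈ ℕ^d` with `|l| = k` such that `xᵢʲ = 0` whenever `l_j ≤ i` (0-indexed rows `i`). -/
theorem kerf_mu_value (k d : ℕ) (hk : 0 < k) (hd : 0 < d)
    (φ : (Fin k → Fin d → ZMod 2) → ℝ)
    (hφ : ∀ c, φ c = ((d : ℝ) ^ k)⁻¹ *
      ∑ l ∈ Finset.Nat.antidiagonalTuple d k, (Nat.multinomial Finset.univ l : ℝ) *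
        ∏ j : Fin d, ∏ i ∈ Finset.univ.filter (fun i : Fin k => (i : ℕ) < l j),
          (if c i j = 0 then (1:ℝ) else 0))
    (μ : (Fin k → Fin d → ZMod 2) → ℝ)
    (hμ : ∀ x, μ x = ((2 : ℝ) ^ (k * d))⁻¹ *
      ∑ a : Fin k → Fin d → ZMod 2,
        φ a * (-1 : ℝ) ^ (∑ i : Fin k, ∑ j : Fin d, a i j * x i j).val) :
    ∀ x : Fin k → Fin d → ZMod 2, μ x ≠ 0 →
      μ x = ((2 : ℝ) ^ k * (d : ℝ) ^ k)⁻¹ *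
        ∑ l ∈ Finset.Nat.antidiagonalTuple d k,
          if (∀ (j : Fin d) (i : Fin k), l j ≤ (i : ℕ) → x i j = 0)
          then (Nat.multinomial Finset.univ l : ℝ) else 0 := by
  classical
  intro x _
  have hml : ∀ l ∈ Finset.Nat.antidiagonalTuple d k, ∀ j : Fin d, l j ≤ k := by
    intro l hl j
    rw [Finset.Nat.mem_antidiagonalTuple] at hl
    calc l j ≤ ∑ i : Fin d, l i :=
          Finset.single_le_sum (fun i _ => Nat.zero_le _) (Finset.mem_univ j)
      _ = k := hl
  have hexp : ∀ a : Fin k → Fin d → ZMod 2,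
      ((-1:ℝ) ^ (∑ i : Fin k, ∑ j : Fin d, a i j * x i j).val)
      = ∏ i : Fin k, ∏ j : Fin d, kerfχ (a i j * x i j) := by
    intro a
    rw [show ((-1:ℝ) ^ (∑ i : Fin k, ∑ j : Fin d, a i j * x i j).val)
        = kerfχ (∑ i : Fin k, ∑ j : Fin d, a i j * x i j) from rfl,
      kerfχ_sum]
    exact Finset.prod_congr rfl fun i _ => kerfχ_sum _ _
  rw [hμ x]
  simp only [hφ, hexp]
  have key : ∑ a : Fin k → Fin d → ZMod 2,
      (((d:ℝ) ^ k)⁻¹ * ∑ l ∈ Finset.Nat.antidiagonalTuple d k,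
        (Nat.multinomial Finset.univ l : ℝ) *
        ∏ j : Fin d, ∏ i ∈ Finset.univ.filter (fun i : Fin k => (i : ℕ) < l j),
          (if a i j = 0 then (1:ℝ) else 0)) *
      ∏ i : Fin k, ∏ j : Fin d, kerfχ (a i j * x i j)
      = ((d:ℝ) ^ k)⁻¹ * ∑ l ∈ Finset.Nat.antidiagonalTuple d k,
          (Nat.multinomial Finset.univ l : ℝ) *
          (if (∀ (j : Fin d) (i : Fin k), l j ≤ (i : ℕ) → x i j = 0)
            then (2:ℝ) ^ (∑ j, (k - l j)) else 0) := by
    calc ∑ a : Fin k → Fin d → ZMod 2,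
        (((d:ℝ) ^ k)⁻¹ * ∑ l ∈ Finset.Nat.antidiagonalTuple d k,
          (Nat.multinomial Finset.univ l : ℝ) *
          ∏ j : Fin d, ∏ i ∈ Finset.univ.filter (fun i : Fin k => (i : ℕ) < l j),
            (if a i j = 0 then (1:ℝ) else 0)) *
        ∏ i : Fin k, ∏ j : Fin d, kerfχ (a i j * x i j)
        = ((d:ℝ) ^ k)⁻¹ * ∑ a : Fin k → Fin d → ZMod 2,
            ∑ l ∈ Finset.Nat.antidiagonalTuple d k,
            (Nat.multinomial Finset.univ l : ℝ) *
            ((∏ j : Fin d, ∏ i ∈ Finset.univ.filter (fun i : Fin k => (i : ℕ) < l j),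
              (if a i j = 0 then (1:ℝ) else 0)) *
              ∏ i : Fin k, ∏ j : Fin d, kerfχ (a i j * x i j)) := by
          rw [Finset.mul_sum]
          refine Finset.sum_congr rfl fun a _ => ?_
          rw [mul_assoc]
          congr 1
          rw [Finset.sum_mul]
          exact Finset.sum_congr rfl fun l _ => mul_assoc _ _ _
      _ = ((d:ℝ) ^ k)⁻¹ * ∑ l ∈ Finset.Nat.antidiagonalTuple d k,
            (Nat.multinomial Finset.univ l : ℝ) *
            ∑ a : Fin k → Fin d → ZMod 2,
            ((∏ j : Fin d, ∏ i ∈ Finset.univ.filter (fun i : Fin k => (i : ℕ) < l j),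
              (if a i j = 0 then (1:ℝ) else 0)) *
              ∏ i : Fin k, ∏ j : Fin d, kerfχ (a i j * x i j)) := by
          rw [Finset.sum_comm]
          congr 1
          exact Finset.sum_congr rfl fun l _ => (Finset.mul_sum _ _ _).symm
      _ = ((d:ℝ) ^ k)⁻¹ * ∑ l ∈ Finset.Nat.antidiagonalTuple d k,
            (Nat.multinomial Finset.univ l : ℝ) *
            (if (∀ (j : Fin d) (i : Fin k), l j ≤ (i : ℕ) → x i j = 0)
              then (2:ℝ) ^ (∑ j, (k - l j)) else 0) := by
          congr 1
          exact Finset.sum_congr rfl fun l hl => by rw [core k d x l (hml l hl)]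
  rw [key]
  have hterm : ∀ l ∈ Finset.Nat.antidiagonalTuple d k,
      (Nat.multinomial Finset.univ l : ℝ) *
        (if (∀ (j : Fin d) (i : Fin k), l j ≤ (i : ℕ) → x i j = 0)
          then (2:ℝ) ^ (∑ j, (k - l j)) else 0)
      = (2:ℝ) ^ (k * d - k) *
        (if (∀ (j : Fin d) (i : Fin k), l j ≤ (i : ℕ) → x i j = 0)
          then (Nat.multinomial Finset.univ l : ℝ) else 0) := by
    intro l hl
    have hsum : ∑ i : Fin d, l i = k := (Finset.Nat.mem_antidiagonalTuple).mp hl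
    have he : ∑ j, (k - l j) = k * d - k := by
      have h1 : ∑ j : Fin d, (k - l j) + ∑ j : Fin d, l j = ∑ j : Fin d, k := by
        rw [← Finset.sum_add_distrib]
        exact Finset.sum_congr rfl fun j _ => Nat.sub_add_cancel (hml l hl j)
      have h2 : ∑ j : Fin d, k = k * d := by
        rw [Finset.sum_const, Finset.card_univ, Fintype.card_fin, smul_eq_mul,
          Nat.mul_comm]
      rw [hsum, h2] at h1
      omega
    rw [he]
    by_cases hc : ∀ (j : Fin d) (i : Fin k), l j ≤ (i : ℕ) → x i j = 0 <;>
      simp [hc, mul_comm]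
  rw [Finset.sum_congr rfl hterm, ← Finset.mul_sum]
  have h2 : (2:ℝ) ^ (k * d) = 2 ^ k * 2 ^ (k * d - k) := by
    rw [← pow_add]
    congr 1
    have : k ≤ k * d := Nat.le_mul_of_pos_right k hd
    omega
  rw [h2]
  have h2k : (2:ℝ) ^ k ≠ 0 := by positivity
  have h2kd : (2:ℝ) ^ (k * d - k) ≠ 0 := by positivity
  have hdk : ((d:ℝ) ^ k) ≠ 0 := by positivity
  field_simp
end

section
/- The number N(k,d) of 0-1 matrices x = (x^j_i), 1 ≤ i ≤ k, 1 ≤ j ≤ d, for which there exists (l_1,...,l_d) ∈ ℕ^d with l_1+...+l_d = k and x^j_i = 0 for all l_j+1 ≤ i ≤ k, equals the coefficient of z^k in the power series expansion of f(z) = (1/(1−z))·((1−z)/(1−2z))^d = (1−z)^{d−1}/(1−2z)^d around z = 0. -/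
open PowerSeries Finset

private def cc (n : ℕ) : ℕ := if n = 0 then 1 else 2 ^ (n - 1)

private def ht {k : ℕ} (v : Fin k → ZMod 2) : ℕ :=
  (Finset.univ.filter fun i => v i ≠ 0).sup fun i => (i : ℕ) + 1

private lemma ht_le_iff {k : ℕ} (v : Fin k → ZMod 2) (t : ℕ) :
    ht v ≤ t ↔ ∀ i : Fin k, t ≤ (i : ℕ) → v i = 0 := by
  unfold ht
  rw [Finset.sup_le_iff]
  constructor
  · intro h i hti
    by_contra hv
    have := h i (by simp [hv])
    omega
  · intro h i hi
    simp only [mem_filter, mem_univ, true_and] at hi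
    by_contra hc
    push_neg at hc
    exact hi (h i (by omega))

private lemma card_col {k : ℕ} (s : ℕ) (hs : s ≤ k) :
    Fintype.card {v : Fin k → ZMod 2 // ht v = s} = cc s := by
  classical
  rcases s with _ | t
  · rw [show cc 0 = 1 from rfl, Fintype.card_eq_one_iff]
    refine ⟨⟨fun _ => 0, le_antisymm ((ht_le_iff _ 0).2 fun i _ => rfl) (Nat.zero_le _)⟩, ?_⟩
    rintro ⟨v, hv⟩
    apply Subtype.ext
    funext i
    exact (ht_le_iff v 0).1 hv.le i (Nat.zero_le _)
  · have htk : t < k := hs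
    have hchar : ∀ v : Fin k → ZMod 2, ht v = t + 1 ↔
        (v ⟨t, htk⟩ = 1 ∧ ∀ i : Fin k, t + 1 ≤ (i : ℕ) → v i = 0) := by
      intro v
      constructor
      · intro h
        have h1 : ∀ i : Fin k, t + 1 ≤ (i : ℕ) → v i = 0 := (ht_le_iff v (t + 1)).1 h.le
        have h2 : ¬ ht v ≤ t := by omega
        rw [ht_le_iff] at h2
        push_neg at h2
        obtain ⟨i, hti, hvi⟩ := h2
        have hit : (i : ℕ) = t := by
          by_contra hne
          exact hvi (h1 i (by omega))
        have hieq : i = ⟨t, htk⟩ := Fin.ext hit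
        refine ⟨?_, h1⟩
        have h01 : ∀ a : ZMod 2, a ≠ 0 → a = 1 := by decide
        rw [← hieq]
        exact h01 _ hvi
      · rintro ⟨h1, h2⟩
        have hle : ht v ≤ t + 1 := (ht_le_iff v (t + 1)).2 h2
        have hgt : ¬ ht v ≤ t := by
          rw [ht_le_iff]
          push_neg
          exact ⟨⟨t, htk⟩, by simp, by rw [h1]; decide⟩
        omega
    have e : {v : Fin k → ZMod 2 // v ⟨t, htk⟩ = 1 ∧ ∀ i : Fin k, t + 1 ≤ (i : ℕ) → v i = 0}
        ≃ (Fin t → ZMod 2) :=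
      { toFun := fun v j => v.1 ⟨j, j.2.trans htk⟩
        invFun := fun w => ⟨fun i => if h : (i : ℕ) < t then w ⟨i, h⟩
            else if (i : ℕ) = t then 1 else 0,
          by simp, fun i hi => by
            show (if h : (i : ℕ) < t then w ⟨i, h⟩ else if (i : ℕ) = t then 1 else 0) = 0
            rw [dif_neg (by omega), if_neg (by omega)]⟩
        left_inv := by
          rintro ⟨v, hv1, hv2⟩
          apply Subtype.ext
          funext i
          dsimp only
          split_ifs with h1 h2
          · rfl
          · rw [show i = ⟨t, htk⟩ from Fin.ext h2, hv1]
          · exact (hv2 i (by omega)).symm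
        right_inv := by
          intro w
          funext j
          dsimp only
          rw [dif_pos j.2] }
    rw [Fintype.card_congr ((Equiv.subtypeEquivRight hchar).trans e)]
    simp [cc, ZMod.card]

private lemma card_fiber {k d : ℕ} (s : Fin d → ℕ) (hs : ∀ j, s j ≤ k) :
    Fintype.card {x : Fin k → Fin d → ZMod 2 // ∀ j, ht (fun i => x i j) = s j} =
      ∏ j, cc (s j) := by
  classical
  have e : {x : Fin k → Fin d → ZMod 2 // ∀ j, ht (fun i => x i j) = s j} ≃
      (∀ j : Fin d, {v : Fin k → ZMod 2 // ht v = s j}) :=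
    { toFun := fun x j => ⟨fun i => x.1 i j, x.2 j⟩
      invFun := fun g => ⟨fun i j => (g j).1 i, fun j => (g j).2⟩
      left_inv := fun x => rfl
      right_inv := fun g => rfl }
  rw [Fintype.card_congr e, Fintype.card_pi]
  exact Finset.prod_congr rfl fun j _ => card_col (s j) (hs j)

private lemma pred_iff {k d : ℕ} (hd : 0 < d) (x : Fin k → Fin d → ZMod 2) :
    (∃ l : Fin d → ℕ, (∑ j, l j) = k ∧ ∀ (j : Fin d) (i : Fin k), l j ≤ (i : ℕ) → x i j = 0)
      ↔ (∑ j, ht (fun i => x i j)) ≤ k := by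
  constructor
  · rintro ⟨l, hl, hv⟩
    calc ∑ j, ht (fun i => x i j) ≤ ∑ j, l j :=
          Finset.sum_le_sum fun j _ => (ht_le_iff _ (l j)).2 (hv j)
      _ = k := hl
  · intro h
    refine ⟨fun j => ht (fun i => x i j) +
        (if j = ⟨0, hd⟩ then k - ∑ j', ht (fun i => x i j') else 0), ?_, ?_⟩
    · rw [Finset.sum_add_distrib, Finset.sum_ite_eq' Finset.univ]
      simp only [Finset.mem_univ, if_true]
      omega
    · intro j i hli
      exact (ht_le_iff (fun i => x i j) _).1 (Nat.le_add_right _ _) i hli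

private lemma one_sub_X_mul_mk_one :
    (1 - X : ℚ⟦X⟧) * PowerSeries.mk (fun _ => (1 : ℚ)) = 1 := by
  ext n
  rw [sub_mul, one_mul, map_sub]
  cases n with
  | zero => simp
  | succ n => simp [coeff_succ_X_mul, coeff_mk, coeff_one]

private lemma key2 :
    (1 - 2 * X : ℚ⟦X⟧) * PowerSeries.mk (fun n => (cc n : ℚ)) = 1 - X := by
  have h2 : (2 : ℚ⟦X⟧) = C (R := ℚ) 2 := by
    simp [← map_ofNat (C (R := ℚ)) 2]
  ext n
  rw [sub_mul, one_mul, map_sub, mul_assoc, h2, coeff_C_mul, map_sub]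
  cases n with
  | zero => simp [cc]
  | succ n =>
    rw [coeff_succ_X_mul, coeff_mk, coeff_mk, coeff_one]
    cases n with
    | zero =>
      simp [cc, coeff_X]
      norm_num
    | succ m =>
      have e1 : cc (m + 2) = 2 ^ (m + 1) := rfl
      have e2 : cc (m + 1) = 2 ^ m := rfl
      rw [e1, e2, coeff_X]
      push_cast [pow_succ]
      simp
      ring

private lemma series_eq (d : ℕ) (hd : 0 < d) :
    (1 - X : ℚ⟦X⟧) ^ (d - 1) * ((1 - 2 * X) ^ d)⁻¹ =
      PowerSeries.mk (fun _ => (1 : ℚ)) * (PowerSeries.mk (fun n => (cc n : ℚ))) ^ d := by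
  have hC : constantCoeff (R := ℚ) ((1 - 2 * X : ℚ⟦X⟧) ^ d) ≠ 0 := by
    rw [map_pow]
    simp
  have hne : ((1 - X : ℚ⟦X⟧) * (1 - 2 * X) ^ d) ≠ 0 := by
    apply mul_ne_zero
    · intro h
      have := congrArg (coeff (R := ℚ) 1) h
      simp [coeff_one] at this
    · intro h
      rw [h] at hC
      simp at hC
  apply mul_right_cancel₀ hne
  have hinv : ((1 - 2 * X : ℚ⟦X⟧) ^ d)⁻¹ * ((1 - 2 * X) ^ d) = 1 :=
    PowerSeries.inv_mul_cancel _ hC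
  calc (1 - X : ℚ⟦X⟧) ^ (d - 1) * ((1 - 2 * X) ^ d)⁻¹ * ((1 - X) * (1 - 2 * X) ^ d)
      = ((1 - X : ℚ⟦X⟧) ^ (d - 1) * (1 - X)) * (((1 - 2 * X) ^ d)⁻¹ * ((1 - 2 * X) ^ d)) := by
        ring
    _ = (1 - X : ℚ⟦X⟧) ^ d := by
        rw [hinv, mul_one, ← pow_succ]
        congr 1
        omega
    _ = PowerSeries.mk (fun _ => (1 : ℚ)) * (PowerSeries.mk (fun n => (cc n : ℚ))) ^ d
          * ((1 - X) * (1 - 2 * X) ^ d) := by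
        rw [show PowerSeries.mk (fun _ => (1 : ℚ)) * (PowerSeries.mk (fun n => (cc n : ℚ))) ^ d
            * ((1 - X) * (1 - 2 * X) ^ d)
            = ((1 - X) * PowerSeries.mk (fun _ => (1 : ℚ)))
              * (((1 - 2 * X) * PowerSeries.mk (fun n => (cc n : ℚ))) ^ d) from by
          rw [mul_pow]; ring]
        rw [one_sub_X_mul_mk_one, key2, one_mul]

private lemma coeff_rhs (k d : ℕ) (hd : 0 < d) :
    PowerSeries.coeff (R := ℚ) k ((1 - PowerSeries.X) ^ (d - 1) *
        ((1 - 2 * PowerSeries.X) ^ d)⁻¹) =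
      ∑ b ∈ Finset.range (k + 1), ∑ l ∈ Finset.finsuppAntidiag (Finset.univ : Finset (Fin d)) b,
        ∏ j, (cc (l j) : ℚ) := by
  rw [series_eq d hd, PowerSeries.coeff_mul, Finset.Nat.sum_antidiagonal_eq_sum_range_succ_mk]
  simp only [coeff_mk, one_mul]
  rw [show ∑ i ∈ Finset.range (k + 1),
        (coeff (R := ℚ) (k - i)) ((PowerSeries.mk (fun n => (cc n : ℚ))) ^ d)
      = ∑ b ∈ Finset.range (k + 1),
        (coeff (R := ℚ) b) ((PowerSeries.mk (fun n => (cc n : ℚ))) ^ d) from by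
    have := Finset.sum_range_reflect
      (fun b => (coeff (R := ℚ) b) ((PowerSeries.mk (fun n => (cc n : ℚ))) ^ d)) (k + 1)
    simpa using this]
  refine Finset.sum_congr rfl fun b _ => ?_
  rw [show (PowerSeries.mk (fun n => (cc n : ℚ))) ^ d
      = ∏ _j : Fin d, PowerSeries.mk (fun n => (cc n : ℚ)) from by simp,
    PowerSeries.coeff_prod]
  refine Finset.sum_congr rfl fun l _ => ?_
  simp [coeff_mk]

/-- The number `N(k,d)` of 0-1 matrices `x = (xᵢʲ)`, `i ∈ Fin k`, `j ∈ Fin d`, for which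
there exists `l = (l₁,…,l_d) ∈ ℕ^d` with `l₁+⋯+l_d = k` and `xᵢʲ = 0` whenever `l_j ≤ i`
(0-indexed, i.e. `l_j + 1 ≤ i ≤ k` when 1-indexed), equals the coefficient of `z^k` in the
power series expansion of `f(z) = (1-z)^{d-1}/(1-2z)^d` around `z = 0`. -/
theorem card_support_matrices_eq_coeff (k d : ℕ) (hk : 0 < k) (hd : 0 < d) :
    (Nat.card {x : Fin k → Fin d → ZMod 2 //
        ∃ l : Fin d → ℕ, (∑ j, l j) = k ∧ ∀ (j : Fin d) (i : Fin k), l j ≤ (i : ℕ) → x i j = 0} : ℚ) =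
      PowerSeries.coeff (R := ℚ) k ((1 - PowerSeries.X) ^ (d - 1) *
        ((1 - 2 * PowerSeries.X) ^ d)⁻¹) := by
  classical
  rw [coeff_rhs k d hd]
  have hcard : Nat.card {x : Fin k → Fin d → ZMod 2 //
      ∃ l : Fin d → ℕ, (∑ j, l j) = k ∧ ∀ (j : Fin d) (i : Fin k), l j ≤ (i : ℕ) → x i j = 0}
      = Nat.card {x : Fin k → Fin d → ZMod 2 // (∑ j, ht (fun i => x i j)) ≤ k} :=
    Nat.card_congr (Equiv.subtypeEquivRight fun x => pred_iff hd x)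
  rw [hcard, Nat.card_eq_fintype_card, Fintype.card_subtype]
  set B : Finset (Fin d → ℕ) :=
    (Fintype.piFinset fun _ : Fin d => Finset.range (k + 1)).filter
      (fun s => ∑ j, s j ≤ k) with hB
  have hmaps : ∀ x ∈ Finset.univ.filter
      (fun x : Fin k → Fin d → ZMod 2 => (∑ j, ht (fun i => x i j)) ≤ k),
      (fun j => ht (fun i => x i j)) ∈ B := by
    intro x hx
    simp only [Finset.mem_filter, Finset.mem_univ, true_and] at hx
    rw [hB, Finset.mem_filter]
    refine ⟨?_, hx⟩
    rw [Fintype.mem_piFinset]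
    intro j
    rw [Finset.mem_range]
    have h1 : ht (fun i => x i j) ≤ ∑ j', ht (fun i => x i j') :=
      Finset.single_le_sum (f := fun j' => ht (fun i => x i j'))
        (fun j' _ => Nat.zero_le _) (Finset.mem_univ j)
    exact Nat.lt_succ_of_le (le_trans h1 hx)
  rw [Finset.card_eq_sum_card_fiberwise hmaps]
  have hfib : ∀ s ∈ B, ((Finset.univ.filter
      (fun x : Fin k → Fin d → ZMod 2 => (∑ j, ht (fun i => x i j)) ≤ k)).filter
      (fun x => (fun j => ht (fun i => x i j)) = s)).card = ∏ j, cc (s j) := by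
    intro s hs
    rw [hB, Finset.mem_filter] at hs
    obtain ⟨hs1, hs2⟩ := hs
    rw [Fintype.mem_piFinset] at hs1
    have hsk : ∀ j, s j ≤ k := fun j => Nat.lt_succ_iff.1 (Finset.mem_range.1 (hs1 j))
    rw [Finset.filter_filter]
    rw [Finset.filter_congr (q := fun x : Fin k → Fin d → ZMod 2 =>
        ∀ j, ht (fun i => x i j) = s j) ?_]
    · rw [← Fintype.card_subtype]
      exact card_fiber s hsk
    · intro x _
      constructor
      · rintro ⟨-, h⟩ j
        exact congrFun h j
      · intro h
        refine ⟨?_, funext h⟩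
        calc (∑ j, ht (fun i => x i j)) = ∑ j, s j := Finset.sum_congr rfl fun j _ => h j
          _ ≤ k := hs2
  rw [Finset.sum_congr rfl hfib]
  push_cast
  have hmaps2 : ∀ s ∈ B, (∑ j, s j) ∈ Finset.range (k + 1) := by
    intro s hs
    rw [hB, Finset.mem_filter] at hs
    rw [Finset.mem_range]
    exact Nat.lt_succ_of_le hs.2
  rw [← Finset.sum_fiberwise_of_maps_to hmaps2 (fun s => ∏ j, (cc (s j) : ℚ))]
  refine Finset.sum_congr rfl fun b hb => ?_
  have hbk : b ≤ k := Nat.lt_succ_iff.1 (Finset.mem_range.1 hb)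
  refine Finset.sum_nbij' (fun s => Finsupp.equivFunOnFinite.symm s) (fun l => ⇑l)
    ?_ ?_ ?_ ?_ ?_
  · intro s hs
    rw [Finset.mem_filter] at hs
    rw [Finset.mem_finsuppAntidiag]
    refine ⟨?_, Finset.subset_univ _⟩
    rw [show ⇑(Finsupp.equivFunOnFinite.symm s) = s from rfl]
    exact hs.2
  · intro l hl
    rw [Finset.mem_finsuppAntidiag] at hl
    obtain ⟨hl1, -⟩ := hl
    rw [Finset.mem_filter, hB, Finset.mem_filter]
    have hlj : ∀ j, l j ≤ b := by
      intro j
      rw [← hl1]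
      exact Finset.single_le_sum (fun j' _ => Nat.zero_le _) (Finset.mem_univ j)
    refine ⟨⟨?_, ?_⟩, hl1⟩
    · rw [Fintype.mem_piFinset]
      intro j
      rw [Finset.mem_range]
      exact Nat.lt_succ_of_le (le_trans (hlj j) hbk)
    · rw [hl1]; exact hbk
  · intro s _
    rfl
  · intro l _
    exact Finsupp.equivFunOnFinite_symm_coe l
  · intro s _
    rfl
end
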